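/- Let f : [0,1]^d → ℝ, let ℓ ∈ ℕ₀^d with ‖ℓ‖₁ ≤ n, and let i ∈ I_ℓ. Then ∑_{q=0}^{d−1} (−1)^q · C(d−1,q) · ∑_{ℓ' ∈ ℕ₀^d : ‖ℓ'‖₁ = n−q and ℓ'_t < ℓ_t for at least one t} f_{ℓ'}(x_{ℓ,i}) = 0, where f_{ℓ'} is the full grid interpolant of f of level ℓ'. (Proposition 4.8, function value cancellation.) -/
import Mathlib


/-- The hierarchical index set: `I_0 = {0,1}`, and for `ℓ ≥ 1` the odd indices in
`{1, …, 2^ℓ − 1}`. -/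
def hierIndex (lam : ℕ) : Finset ℕ :=
  if lam = 0 then ({0, 1} : Finset ℕ)
  else (Finset.range (2 ^ lam)).filter fun j => Odd j

/-- The grid point `x_{lam,j} = j / 2^lam ∈ [0,1]` (junk value for `j > 2^lam`). -/
noncomputable def gridPt (lam j : ℕ) : Set.Icc (0:ℝ) 1 :=
  if h : j ≤ 2 ^ lam then
    ⟨(j : ℝ) / 2 ^ lam, Set.mem_Icc.mpr
      ⟨by positivity, by
        rw [div_le_one (by positivity)]
        exact_mod_cast h⟩⟩
  else ⟨0, Set.mem_Icc.mpr ⟨le_rfl, zero_le_one⟩⟩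

/-- The nodal space `V_{ℓ'}` spanned by the tensor products of the nodal basis of level `ℓ'`. -/
noncomputable def nodalSpace (d : ℕ) (φ : ℕ → ℕ → Set.Icc (0:ℝ) 1 → ℝ)
    (ℓ' : Fin d → ℕ) : Submodule ℝ ((Fin d → Set.Icc (0:ℝ) 1) → ℝ) :=
  Submodule.span ℝ (Set.range fun i : (∀ t, Fin (2 ^ (ℓ' t) + 1)) =>
    fun x : Fin d → Set.Icc (0:ℝ) 1 => ∏ t, φ (ℓ' t) (i t) (x t))

open Finset

noncomputable def Mmat (φ : ℕ → ℕ → Set.Icc (0:ℝ) 1 → ℝ) (lam : ℕ) :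
    Matrix (Fin (2 ^ lam + 1)) (Fin (2 ^ lam + 1)) ℝ :=
  Matrix.of fun j j' => φ lam (j'.val) (gridPt lam (j : ℕ))

noncomputable def Nmat (φ : ℕ → ℕ → Set.Icc (0:ℝ) 1 → ℝ) (lam : ℕ) :
    Matrix (Fin (2 ^ lam + 1)) (Fin (2 ^ lam + 1)) ℝ :=
  (Mmat φ lam)⁻¹

noncomputable def card1 (φ : ℕ → ℕ → Set.Icc (0:ℝ) 1 → ℝ) (lam k : ℕ)
    (y : Set.Icc (0:ℝ) 1) : ℝ :=
  if h : k < 2 ^ lam + 1 then ∑ j' : Fin (2 ^ lam + 1), φ lam (j'.val) y * Nmat φ lam j' ⟨k, h⟩ else 0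

section
variable (φ : ℕ → ℕ → Set.Icc (0:ℝ) 1 → ℝ)
  (hinv : ∀ lam : ℕ, IsUnit (Matrix.of fun j j' : Fin (2 ^ lam + 1) =>
      φ lam (j'.val) (gridPt lam (j : ℕ))))

include hinv

lemma MN_eq (lam : ℕ) : Mmat φ lam * Nmat φ lam = 1 :=
  Matrix.mul_nonsing_inv _ ((Matrix.isUnit_iff_isUnit_det _).mp (hinv lam))

lemma NM_eq (lam : ℕ) : Nmat φ lam * Mmat φ lam = 1 :=
  Matrix.nonsing_inv_mul _ ((Matrix.isUnit_iff_isUnit_det _).mp (hinv lam))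

lemma card1_grid (lam : ℕ) (j : Fin (2 ^ lam + 1)) (k : ℕ) (hk : k < 2 ^ lam + 1) :
    card1 φ lam k (gridPt lam (j : ℕ)) = if (j : ℕ) = k then 1 else 0 := by
  rw [card1, dif_pos hk]
  have : ∑ j' : Fin (2 ^ lam + 1), φ lam (j'.val) (gridPt lam (j : ℕ)) * Nmat φ lam j' ⟨k, hk⟩
      = (Mmat φ lam * Nmat φ lam) j ⟨k, hk⟩ := by
    rw [Matrix.mul_apply]; rfl
  rw [this, MN_eq φ hinv, Matrix.one_apply]
  simp [Fin.ext_iff]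

lemma phi_expand (lam : ℕ) (i' : Fin (2 ^ lam + 1)) (y : Set.Icc (0:ℝ) 1) :
    ∑ k ∈ range (2 ^ lam + 1), φ lam (i' : ℕ) (gridPt lam k) * card1 φ lam k y
      = φ lam (i' : ℕ) y := by
  rw [← Fin.sum_univ_eq_sum_range (fun k => φ lam (i' : ℕ) (gridPt lam k) * card1 φ lam k y)]
  have : ∀ k : Fin (2 ^ lam + 1),
      φ lam (i' : ℕ) (gridPt lam (k : ℕ)) * card1 φ lam (k : ℕ) y
      = ∑ j' : Fin (2 ^ lam + 1), φ lam (j'.val) y * (Nmat φ lam j' k * Mmat φ lam k i') := by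
    intro k
    rw [card1, dif_pos k.isLt, Fin.eta, Finset.mul_sum]
    refine Finset.sum_congr rfl fun j' _ => ?_
    have hM : Mmat φ lam k i' = φ lam (i' : ℕ) (gridPt lam (k : ℕ)) := rfl
    rw [hM]; ring
  rw [Finset.sum_congr rfl fun k _ => this k, Finset.sum_comm]
  have : ∀ j' : Fin (2 ^ lam + 1),
      ∑ k, φ lam (j'.val) y * (Nmat φ lam j' k * Mmat φ lam k i')
      = φ lam (j'.val) y * (Nmat φ lam * Mmat φ lam) j' i' := by
    intro j'; rw [Matrix.mul_apply, Finset.mul_sum]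
  rw [Finset.sum_congr rfl fun j' _ => this j', NM_eq φ hinv]
  simp only [Matrix.one_apply, mul_ite, mul_one, mul_zero]
  rw [Finset.sum_ite_eq' univ i' (fun j' => φ lam (j'.val) y)]
  simp

lemma nodal_repr (d : ℕ) (m : Fin d → ℕ) (G : (Fin d → Set.Icc (0:ℝ) 1) → ℝ)
    (hG : G ∈ nodalSpace d φ m) (x : Fin d → Set.Icc (0:ℝ) 1) :
    G x = ∑ j ∈ Fintype.piFinset (fun t => range (2 ^ m t + 1)),
      G (fun t => gridPt (m t) (j t)) * ∏ t, card1 φ (m t) (j t) (x t) := by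
  obtain ⟨c, hc⟩ := (Submodule.mem_span_range_iff_exists_fun ℝ).mp hG
  subst hc
  have expand : ∀ y : Fin d → Set.Icc (0:ℝ) 1,
      (∑ i : (∀ t, Fin (2 ^ m t + 1)), c i •
        fun x : Fin d → Set.Icc (0:ℝ) 1 => ∏ t, φ (m t) (i t) (x t)) y
      = ∑ i : (∀ t, Fin (2 ^ m t + 1)), c i * ∏ t, φ (m t) ((i t : ℕ)) (y t) := by
    intro y; rw [Finset.sum_apply]; rfl
  rw [expand x]
  calc ∑ i : (∀ t, Fin (2 ^ m t + 1)), c i * ∏ t, φ (m t) ((i t : ℕ)) (x t)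
      = ∑ i : (∀ t, Fin (2 ^ m t + 1)), c i *
          ∏ t, ∑ k ∈ range (2 ^ m t + 1), φ (m t) ((i t : ℕ)) (gridPt (m t) k)
            * card1 φ (m t) k (x t) := by
        refine Finset.sum_congr rfl fun i _ => ?_
        congr 1
        exact (Finset.prod_congr rfl fun t _ => phi_expand φ hinv (m t) (i t) (x t)).symm
    _ = ∑ i : (∀ t, Fin (2 ^ m t + 1)), c i *
          ∑ j ∈ Fintype.piFinset (fun t => range (2 ^ m t + 1)),
            ∏ t, φ (m t) ((i t : ℕ)) (gridPt (m t) (j t)) * card1 φ (m t) (j t) (x t) := by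
        refine Finset.sum_congr rfl fun i _ => ?_
        rw [Finset.prod_univ_sum]
    _ = ∑ j ∈ Fintype.piFinset (fun t => range (2 ^ m t + 1)),
          ∑ i : (∀ t, Fin (2 ^ m t + 1)), c i *
            ∏ t, φ (m t) ((i t : ℕ)) (gridPt (m t) (j t)) * card1 φ (m t) (j t) (x t) := by
        simp_rw [Finset.mul_sum]
        exact Finset.sum_comm
    _ = ∑ j ∈ Fintype.piFinset (fun t => range (2 ^ m t + 1)),
          (∑ i : (∀ t, Fin (2 ^ m t + 1)), c i •
            fun x : Fin d → Set.Icc (0:ℝ) 1 => ∏ t, φ (m t) (i t) (x t))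
            (fun t => gridPt (m t) (j t)) * ∏ t, card1 φ (m t) (j t) (x t) := by
        refine Finset.sum_congr rfl fun j _ => ?_
        rw [expand]
        rw [Finset.sum_mul]
        refine Finset.sum_congr rfl fun i _ => ?_
        rw [Finset.prod_mul_distrib]
        ring

end

noncomputable def wsum (d : ℕ) (φ : ℕ → ℕ → Set.Icc (0:ℝ) 1 → ℝ)
    (f : (Fin d → Set.Icc (0:ℝ) 1) → ℝ) (x : Fin d → Set.Icc (0:ℝ) 1)
    (m : Fin d → ℕ) : ℝ :=
  ∑ j ∈ Fintype.piFinset (fun t => range (2 ^ m t + 1)),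
    f (fun t => gridPt (m t) (j t)) * ∏ t, card1 φ (m t) (j t) (x t)

lemma gridPt_scale (lam mu k : ℕ) (h : lam ≤ mu) (hk : k ≤ 2 ^ lam) :
    gridPt mu (k * 2 ^ (mu - lam)) = gridPt lam k := by
  have h2 : (2:ℕ) ^ mu = 2 ^ lam * 2 ^ (mu - lam) := by
    rw [← pow_add]; congr 1; omega
  have hle : k * 2 ^ (mu - lam) ≤ 2 ^ mu := by
    rw [h2]; exact Nat.mul_le_mul_right _ hk
  rw [gridPt, gridPt, dif_pos hle, dif_pos hk]
  apply Subtype.ext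
  show ((k * 2 ^ (mu - lam) : ℕ) : ℝ) / 2 ^ mu = (k : ℝ) / 2 ^ lam
  have h2' : (2:ℝ) ^ mu = 2 ^ lam * 2 ^ (mu - lam) := by exact_mod_cast congrArg Nat.cast h2
  rw [h2']
  push_cast
  rw [mul_div_mul_right _ _ (by positivity : ((2:ℝ) ^ (mu - lam)) ≠ 0)]

section
variable (φ : ℕ → ℕ → Set.Icc (0:ℝ) 1 → ℝ)
  (hinv : ∀ lam : ℕ, IsUnit (Matrix.of fun j j' : Fin (2 ^ lam + 1) =>
      φ lam (j' : ℕ) (gridPt lam (j : ℕ))))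
  (d : ℕ) (f : (Fin d → Set.Icc (0:ℝ) 1) → ℝ) (ℓ i : Fin d → ℕ)
  (hi2 : ∀ t, i t ≤ 2 ^ ℓ t)

include hinv hi2

lemma card1_one (m : Fin d → ℕ) (t : Fin d) (h : ℓ t ≤ m t) :
    card1 φ (m t) (i t * 2 ^ (m t - ℓ t)) (gridPt (ℓ t) (i t)) = 1 := by
  have hle : i t * 2 ^ (m t - ℓ t) < 2 ^ m t + 1 := by
    have := Nat.mul_le_mul_right (2 ^ (m t - ℓ t)) (hi2 t)
    rw [← pow_add] at this
    have h2 : ℓ t + (m t - ℓ t) = m t := by omega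
    rw [h2] at this; omega
  rw [← gridPt_scale (ℓ t) (m t) (i t) h (hi2 t)]
  have := card1_grid φ hinv (m t) ⟨i t * 2 ^ (m t - ℓ t), hle⟩ (i t * 2 ^ (m t - ℓ t)) hle
  simpa using this

lemma card1_zero (m : Fin d → ℕ) (t : Fin d) (h : ℓ t ≤ m t) (k : ℕ)
    (hk : k ≠ i t * 2 ^ (m t - ℓ t)) :
    card1 φ (m t) k (gridPt (ℓ t) (i t)) = 0 := by
  by_cases hlt : k < 2 ^ m t + 1
  · have hle : i t * 2 ^ (m t - ℓ t) < 2 ^ m t + 1 := by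
      have := Nat.mul_le_mul_right (2 ^ (m t - ℓ t)) (hi2 t)
      rw [← pow_add] at this
      have h2 : ℓ t + (m t - ℓ t) = m t := by omega
      rw [h2] at this; omega
    rw [← gridPt_scale (ℓ t) (m t) (i t) h (hi2 t)]
    have := card1_grid φ hinv (m t) ⟨i t * 2 ^ (m t - ℓ t), hle⟩ k hlt
    simpa [hk.symm] using this
  · rw [card1, dif_neg hlt]

lemma wsum_collapse (m : Fin d → ℕ) :
    wsum d φ f (fun t => gridPt (ℓ t) (i t)) m
      = ∑ j ∈ Fintype.piFinset (fun t =>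
          if ℓ t ≤ m t then ({i t * 2 ^ (m t - ℓ t)} : Finset ℕ)
          else range (2 ^ m t + 1)),
        f (fun t => gridPt (m t) (j t)) * ∏ t, card1 φ (m t) (j t) (gridPt (ℓ t) (i t)) := by
  refine (Finset.sum_subset ?_ ?_).symm
  · intro j hj
    rw [Fintype.mem_piFinset] at hj ⊢
    intro t
    have := hj t
    split at this
    · next hl =>
      rw [Finset.mem_singleton] at this
      rw [Finset.mem_range, this]
      have hmul := Nat.mul_le_mul_right (2 ^ (m t - ℓ t)) (hi2 t)
      rw [← pow_add] at hmul
      have h2 : ℓ t + (m t - ℓ t) = m t := by omega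
      rw [h2] at hmul; omega
    · exact this
  · intro j hj hnj
    rw [Fintype.mem_piFinset] at hj
    have : ∃ t, j t ∉ (if ℓ t ≤ m t then ({i t * 2 ^ (m t - ℓ t)} : Finset ℕ)
        else range (2 ^ m t + 1)) := by
      by_contra hc
      push_neg at hc
      exact hnj (Fintype.mem_piFinset.mpr hc)
    obtain ⟨t, ht⟩ := this
    by_cases hl : ℓ t ≤ m t
    · rw [if_pos hl, Finset.mem_singleton] at ht
      apply mul_eq_zero_of_right
      exact Finset.prod_eq_zero (Finset.mem_univ t)
        (card1_zero φ hinv d ℓ i hi2 m t hl (j t) ht)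
    · rw [if_neg hl] at ht
      exact absurd (hj t) ht

lemma wsum_class (m m' : Fin d → ℕ)
    (H : ∀ t, m t = m' t ∨ (ℓ t ≤ m t ∧ ℓ t ≤ m' t)) :
    wsum d φ f (fun t => gridPt (ℓ t) (i t)) m
      = wsum d φ f (fun t => gridPt (ℓ t) (i t)) m' := by
  have Hle : ∀ t, ℓ t ≤ m t ↔ ℓ t ≤ m' t := by
    intro t
    rcases H t with h | ⟨h1, h2⟩
    · rw [h]
    · exact ⟨fun _ => h2, fun _ => h1⟩
  rw [wsum_collapse φ hinv d f ℓ i hi2 m, wsum_collapse φ hinv d f ℓ i hi2 m']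
  refine Finset.sum_nbij'
    (fun j t => if ℓ t ≤ m t then i t * 2 ^ (m' t - ℓ t) else j t)
    (fun j t => if ℓ t ≤ m' t then i t * 2 ^ (m t - ℓ t) else j t)
    ?_ ?_ ?_ ?_ ?_
  · intro j hj
    rw [Fintype.mem_piFinset] at hj ⊢
    intro t
    by_cases hl : ℓ t ≤ m t
    · simp only [if_pos hl, if_pos ((Hle t).mp hl)]
      exact Finset.mem_singleton_self _
    · simp only [if_neg hl, if_neg (fun h => hl ((Hle t).mpr h))]
      have := hj t
      rw [if_neg hl] at this
      have heq : m t = m' t := (H t).resolve_right (fun ⟨h1, _⟩ => hl h1)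
      rwa [heq] at this
  · intro j hj
    rw [Fintype.mem_piFinset] at hj ⊢
    intro t
    by_cases hl : ℓ t ≤ m' t
    · simp only [if_pos hl, if_pos ((Hle t).mpr hl)]
      exact Finset.mem_singleton_self _
    · simp only [if_neg hl, if_neg (fun h => hl ((Hle t).mp h))]
      have := hj t
      rw [if_neg hl] at this
      have heq : m t = m' t := (H t).resolve_right (fun ⟨_, h2⟩ => hl h2)
      rwa [← heq] at this
  · intro j hj
    rw [Fintype.mem_piFinset] at hj
    funext t
    by_cases hl : ℓ t ≤ m t
    · simp only [if_pos hl, if_pos ((Hle t).mp hl)]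
      have := hj t
      rw [if_pos hl, Finset.mem_singleton] at this
      exact this.symm
    · simp only [if_neg hl, if_neg (fun h => hl ((Hle t).mpr h))]
  · intro j hj
    rw [Fintype.mem_piFinset] at hj
    funext t
    by_cases hl : ℓ t ≤ m' t
    · simp only [if_pos hl, if_pos ((Hle t).mpr hl)]
      have := hj t
      rw [if_pos hl, Finset.mem_singleton] at this
      exact this.symm
    · simp only [if_neg hl, if_neg (fun h => hl ((Hle t).mp h))]
  · intro j hj
    rw [Fintype.mem_piFinset] at hj
    have hpt : ∀ t, gridPt (m t) (j t)
        = gridPt (m' t) (if ℓ t ≤ m t then i t * 2 ^ (m' t - ℓ t) else j t) := by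
      intro t
      by_cases hl : ℓ t ≤ m t
      · rw [if_pos hl]
        have hjt := hj t
        rw [if_pos hl, Finset.mem_singleton] at hjt
        rw [hjt, gridPt_scale (ℓ t) (m t) (i t) hl (hi2 t),
          gridPt_scale (ℓ t) (m' t) (i t) ((Hle t).mp hl) (hi2 t)]
      · rw [if_neg hl]
        have heq : m t = m' t := (H t).resolve_right (fun ⟨h1, _⟩ => hl h1)
        rw [heq]
    have hcd : ∀ t, card1 φ (m t) (j t) (gridPt (ℓ t) (i t))
        = card1 φ (m' t) (if ℓ t ≤ m t then i t * 2 ^ (m' t - ℓ t) else j t)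
            (gridPt (ℓ t) (i t)) := by
      intro t
      by_cases hl : ℓ t ≤ m t
      · rw [if_pos hl]
        have hjt := hj t
        rw [if_pos hl, Finset.mem_singleton] at hjt
        rw [hjt, card1_one φ hinv d ℓ i hi2 m t hl,
          card1_one φ hinv d ℓ i hi2 m' t ((Hle t).mp hl)]
      · rw [if_neg hl]
        have heq : m t = m' t := (H t).resolve_right (fun ⟨h1, _⟩ => hl h1)
        rw [heq]
    congr 1
    · congr 1
      funext t
      exact hpt t
    · exact Finset.prod_congr rfl fun t _ => hcd t

end
open Finset

lemma sb_card {ι : Type*} [DecidableEq ι] (T : Finset ι) (hT : T.Nonempty) (r : ℕ) :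
    (T.piAntidiag r).card = (r + T.card - 1).choose r := by
  induction T using Finset.cons_induction generalizing r with
  | empty => exact absurd hT (by simp)
  | cons a s ha ih =>
    rcases s.eq_empty_or_nonempty with rfl | hs
    · rw [piAntidiag_cons (by simp) r, card_disjiUnion]
      simp only [card_map, piAntidiag_empty]
      rw [Nat.sum_antidiagonal_eq_sum_range_succ_mk]
      have : ∀ k ∈ range (r+1), (if r - k = 0 then ({0} : Finset (ι → ℕ)) else ∅).card
          = if k = r then 1 else 0 := by
        intro k hk
        have := mem_range.mp hk
        by_cases h : k = r <;> simp [h, Nat.sub_eq_zero_iff_le] <;> omega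
      rw [Finset.sum_congr rfl this, Finset.sum_ite_eq' (range (r+1)) r (fun _ => 1)]
      simp
    · rw [piAntidiag_cons ha r, card_disjiUnion]
      simp only [card_map, ih hs]
      rw [Nat.sum_antidiagonal_eq_sum_range_succ_mk]
      have hm : 1 ≤ s.card := hs.card_pos
      calc ∑ k ∈ range (r+1), ((r - k) + s.card - 1).choose (r - k)
          = ∑ k ∈ range (r+1), (k + s.card - 1).choose k := by
            rw [← Finset.sum_range_reflect (fun k => (k + s.card - 1).choose k) (r+1)]
            refine Finset.sum_congr rfl fun k hk => ?_
            have := mem_range.mp hk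
            congr 1 <;> omega
        _ = ∑ k ∈ range (r+1), (k + (s.card - 1)).choose (s.card - 1) := by
            refine Finset.sum_congr rfl fun k hk => ?_
            rw [show k + s.card - 1 = k + (s.card - 1) by omega,
              ← Nat.choose_symm (Nat.le_add_right k (s.card - 1)), Nat.add_sub_cancel_left]
        _ = (r + (s.card - 1) + 1).choose ((s.card - 1) + 1) :=
            Nat.sum_range_add_choose r (s.card - 1)
        _ = (r + (cons a s ha).card - 1).choose r := by
            rw [card_cons, show r + (s.card - 1) + 1 = r + s.card by omega,
              show s.card - 1 + 1 = s.card by omega,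
              show r + (s.card + 1) - 1 = r + s.card by omega,
              ← Nat.choose_symm (Nat.le_add_left s.card r), Nat.add_sub_cancel]

lemma abel_step (K : ℕ) (g : ℕ → ℤ) :
    ∑ q ∈ range (K+2), (-1:ℤ)^q * ((K+1).choose q) * g q
      = ∑ q ∈ range (K+1), (-1:ℤ)^q * (K.choose q) * (g q - g (q+1)) := by
  have tel : ∑ q ∈ range (K+1),
      ((-1:ℤ)^q * (K.choose q) * g q - (-1:ℤ)^(q+1) * (K.choose (q+1)) * g (q+1))
      = (-1:ℤ)^0 * (K.choose 0) * g 0 - (-1:ℤ)^(K+1) * (K.choose (K+1)) * g (K+1) :=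
    Finset.sum_range_sub' (fun q => (-1:ℤ)^q * (K.choose q) * g q) (K+1)
  have key : ∀ q ∈ range (K+1),
      (-1:ℤ)^(q+1) * (((K+1).choose (q+1) : ℕ) : ℤ) * g (q+1)
      = ((-1:ℤ)^q * (K.choose q) * (g q - g (q+1))
        - ((-1:ℤ)^q * (K.choose q) * g q - (-1:ℤ)^(q+1) * (K.choose (q+1)) * g (q+1))) := by
    intro q _
    rw [Nat.choose_succ_succ]
    push_cast
    ring
  rw [Finset.sum_range_succ' (fun q => (-1:ℤ)^q * ((K+1).choose q) * g q) (K+1),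
    Finset.sum_congr rfl key, Finset.sum_sub_distrib, tel]
  simp [Nat.choose_succ_self]

lemma altsum_choose (r : ℕ) : ∀ k A : ℕ, r < k → k ≤ A →
    ∑ q ∈ range (k+1), (-1:ℤ)^q * (k.choose q) * ((A - q).choose r) = 0 := by
  induction r with
  | zero =>
    intro k A hrk hkA
    simp only [Nat.choose_zero_right, Nat.cast_one, mul_one]
    rw [Int.alternating_sum_range_choose]
    rw [if_neg (by omega : ¬ k = 0)]
  | succ r ih =>
    intro k A hrk hkA
    obtain ⟨K, rfl⟩ : ∃ K, k = K + 1 := ⟨k - 1, by omega⟩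
    rw [show K + 1 + 1 = K + 2 by rfl, abel_step K (fun q => ((A - q).choose (r+1) : ℤ))]
    have : ∀ q ∈ range (K+1),
        (-1:ℤ)^q * (K.choose q) * (((A - q).choose (r+1) : ℤ) - ((A - (q+1)).choose (r+1) : ℤ))
        = (-1:ℤ)^q * (K.choose q) * (((A-1) - q).choose r : ℤ) := by
      intro q hq
      have hqK := mem_range.mp hq
      have hA : A - q = (A - (q+1)) + 1 := by omega
      rw [hA, Nat.choose_succ_succ']
      have : A - (q + 1) = A - 1 - q := by omega
      push_cast [this]
      ring
    rw [Finset.sum_congr rfl this]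
    exact ih K (A-1) (by omega) (by omega)
/-- **Proposition 4.8 (function value cancellation).** -/
theorem function_value_cancellation
    (d n : ℕ) (hd : 1 ≤ d)
    (φ : ℕ → ℕ → Set.Icc (0:ℝ) 1 → ℝ)
    (hinv : ∀ lam : ℕ, IsUnit (Matrix.of fun j j' : Fin (2 ^ lam + 1) =>
      φ lam (j' : ℕ) (gridPt lam (j : ℕ))))
    (f : (Fin d → Set.Icc (0:ℝ) 1) → ℝ)
    (F : (Fin d → ℕ) → ((Fin d → Set.Icc (0:ℝ) 1) → ℝ))
    (hFmem : ∀ ℓ', F ℓ' ∈ nodalSpace d φ ℓ')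
    (hFinterp : ∀ ℓ' : Fin d → ℕ, ∀ j : (∀ t, Fin (2 ^ (ℓ' t) + 1)),
      F ℓ' (fun t => gridPt (ℓ' t) (j t)) = f (fun t => gridPt (ℓ' t) (j t)))
    (ℓ : Fin d → ℕ) (hℓ : (∑ t, ℓ t) ≤ n)
    (i : Fin d → ℕ) (hi : ∀ t, i t ∈ hierIndex (ℓ t)) :
    ∑ q ∈ Finset.range d, (-1 : ℝ) ^ q * ((d - 1).choose q : ℝ) *
      ∑ ℓ' ∈ (Fintype.piFinset fun _ : Fin d => Finset.range (n + 1)).filter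
        (fun ℓ' => (∑ t, (ℓ' t : ℤ)) = (n : ℤ) - q ∧ ∃ t, ℓ' t < ℓ t),
        F ℓ' (fun t => gridPt (ℓ t) (i t))
    = 0 := by
  classical
  have hi2 : ∀ t, i t ≤ 2 ^ ℓ t := by
    intro t
    have h := hi t
    rw [hierIndex] at h
    split_ifs at h with h0
    · rw [h0, pow_zero]
      rcases Finset.mem_insert.mp h with h | h
      · omega
      · rw [Finset.mem_singleton] at h; omega
    · have := Finset.mem_range.mp (Finset.mem_filter.mp h).1
      omega
  set X : Fin d → Set.Icc (0:ℝ) 1 := fun t => gridPt (ℓ t) (i t) with hXdef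
  set A : ℕ → Finset (Fin d → ℕ) := fun q =>
    (Fintype.piFinset fun _ : Fin d => Finset.range (n + 1)).filter
      (fun ℓ' => (∑ t, (ℓ' t : ℤ)) = (n : ℤ) - q ∧ ∃ t, ℓ' t < ℓ t) with hAdef
  set B : Finset (Fin d → ℕ) := Fintype.piFinset (fun t : Fin d => range (ℓ t + 1)) with hBdef
  set ρ : (Fin d → ℕ) → (Fin d → ℕ) := fun ℓ' t => min (ℓ' t) (ℓ t) with hρdef
  set W : (Fin d → ℕ) → ℝ := fun b => wsum d φ f X b with hWdef
  -- F ℓ' at X equals wsum at the min level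
  have hFX : ∀ ℓ' : Fin d → ℕ, F ℓ' X = W (ρ ℓ') := by
    intro ℓ'
    have h1 : F ℓ' X = wsum d φ f X ℓ' := by
      rw [nodal_repr φ hinv d ℓ' (F ℓ') (hFmem ℓ') X, wsum]
      refine Finset.sum_congr rfl fun j hj => ?_
      rw [Fintype.mem_piFinset] at hj
      congr 1
      exact hFinterp ℓ' (fun t => ⟨j t, Finset.mem_range.mp (hj t)⟩)
    rw [h1, hWdef]
    refine wsum_class φ hinv d f ℓ i hi2 ℓ' (ρ ℓ') fun t => ?_
    rcases le_total (ℓ' t) (ℓ t) with h | h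
    · exact Or.inl (min_eq_left h).symm
    · exact Or.inr ⟨h, le_min h le_rfl⟩
  have hmaps : ∀ q, ∀ ℓ' ∈ A q, ρ ℓ' ∈ B := by
    intro q ℓ' _
    rw [hBdef, Fintype.mem_piFinset]
    intro t
    rw [Finset.mem_range]
    exact Nat.lt_succ_of_le (min_le_right _ _)
  have step1 : ∀ q, ∑ ℓ' ∈ A q, F ℓ' X
      = ∑ b ∈ B, (((A q).filter (fun ℓ' => ρ ℓ' = b)).card : ℝ) * W b := by
    intro q
    rw [← Finset.sum_fiberwise_of_maps_to (hmaps q) (fun ℓ' => F ℓ' X)]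
    refine Finset.sum_congr rfl fun b _ => ?_
    have : ∀ ℓ' ∈ (A q).filter (fun ℓ' => ρ ℓ' = b), F ℓ' X = W b := by
      intro ℓ' hl'
      rw [hFX ℓ', (Finset.mem_filter.mp hl').2]
    rw [Finset.sum_congr rfl this, Finset.sum_const, nsmul_eq_mul]
  calc ∑ q ∈ Finset.range d, (-1 : ℝ) ^ q * ((d - 1).choose q : ℝ) * ∑ ℓ' ∈ A q, F ℓ' X
      = ∑ q ∈ Finset.range d, ∑ b ∈ B, (-1 : ℝ) ^ q * ((d - 1).choose q : ℝ) *
          ((((A q).filter (fun ℓ' => ρ ℓ' = b)).card : ℝ) * W b) := by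
        refine Finset.sum_congr rfl fun q _ => ?_
        rw [step1 q, Finset.mul_sum]
    _ = ∑ b ∈ B, ∑ q ∈ Finset.range d, (-1 : ℝ) ^ q * ((d - 1).choose q : ℝ) *
          ((((A q).filter (fun ℓ' => ρ ℓ' = b)).card : ℝ) * W b) := Finset.sum_comm
    _ = ∑ b ∈ B, (∑ q ∈ Finset.range d, (-1 : ℝ) ^ q * ((d - 1).choose q : ℝ) *
          (((A q).filter (fun ℓ' => ρ ℓ' = b)).card : ℝ)) * W b := by
        refine Finset.sum_congr rfl fun b _ => ?_
        rw [Finset.sum_mul]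
        exact Finset.sum_congr rfl fun q _ => by ring
    _ = 0 := by
        refine Finset.sum_eq_zero fun b hb => ?_
        suffices h : ∑ q ∈ Finset.range d, (-1 : ℝ) ^ q * ((d - 1).choose q : ℝ) *
            (((A q).filter (fun ℓ' => ρ ℓ' = b)).card : ℝ) = 0 by
          rw [h, zero_mul]
        have hbl : ∀ t, b t ≤ ℓ t := by
          intro t
          rw [hBdef, Fintype.mem_piFinset] at hb
          have := Finset.mem_range.mp (hb t)
          omega
        set T : Finset (Fin d) := univ.filter (fun t => ℓ t ≤ b t) with hTdef
        by_cases hTuniv : T = univ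
        · -- all fibers empty
          have hempty : ∀ q, (A q).filter (fun ℓ' => ρ ℓ' = b) = ∅ := by
            intro q
            rw [Finset.filter_eq_empty_iff]
            intro ℓ' hA hρb
            obtain ⟨-, -, t, hlt⟩ := Finset.mem_filter.mp hA
            have h1 : ℓ t ≤ b t := by
              have : t ∈ T := hTuniv ▸ Finset.mem_univ t
              exact (Finset.mem_filter.mp this).2
            have h2 : min (ℓ' t) (ℓ t) = b t := congrFun hρb t
            have h3 := min_le_left (ℓ' t) (ℓ t)
            omega
          simp [hempty]
        · -- there is a coordinate with b t < ℓ t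
          obtain ⟨t0, ht0⟩ : ∃ t, t ∉ T := by
            by_contra hc
            push_neg at hc
            exact hTuniv (Finset.eq_univ_iff_forall.mpr hc)
          have ht0' : b t0 < ℓ t0 := by
            have : ¬ ℓ t0 ≤ b t0 := fun h => ht0 (Finset.mem_filter.mpr ⟨Finset.mem_univ _, h⟩)
            omega
          -- basic facts about fibers
          have hfiber_min : ∀ q (ℓ' : Fin d → ℕ), ℓ' ∈ (A q).filter (fun ℓ' => ρ ℓ' = b) →
              (∀ t, b t ≤ ℓ' t) ∧ (∀ t ∉ T, ℓ' t = b t) ∧ (∀ t ∈ T, b t = ℓ t) := by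
            intro q ℓ' hl'
            have hρb := (Finset.mem_filter.mp hl').2
            refine ⟨fun t => ?_, fun t ht => ?_, fun t ht => ?_⟩
            · have h2 : min (ℓ' t) (ℓ t) = b t := congrFun hρb t
              have := min_le_left (ℓ' t) (ℓ t)
              rcases min_cases (ℓ' t) (ℓ t) with ⟨h, _⟩ | ⟨h, _⟩ <;> omega
            · have h2 : min (ℓ' t) (ℓ t) = b t := congrFun hρb t
              have hnt : ¬ ℓ t ≤ b t := fun h => ht (Finset.mem_filter.mpr ⟨Finset.mem_univ _, h⟩)
              rcases min_cases (ℓ' t) (ℓ t) with ⟨h, _⟩ | ⟨h, h'⟩ <;> omega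
            · exact le_antisymm (hbl t) ((Finset.mem_filter.mp ht).2)
          by_cases hT : T.Nonempty
          · -- main case
            have hm1 : 1 ≤ T.card := hT.card_pos
            have hmd : T.card < d := by
              have h1 : T ⊂ univ := (Finset.ssubset_univ_iff).mpr hTuniv
              have := Finset.card_lt_card h1
              simpa using this
            set m : ℕ := T.card with hmdef
            -- bound on the base sum
            have hTsum : ∑ t ∈ T, b t = ∑ t ∈ T, ℓ t :=
              Finset.sum_congr rfl fun t ht =>
                le_antisymm (hbl t) ((Finset.mem_filter.mp ht).2)
            have hTc : ∑ t ∈ univ \ T, (b t + 1) ≤ ∑ t ∈ univ \ T, ℓ t := by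
              refine Finset.sum_le_sum fun t ht => ?_
              have : t ∉ T := (Finset.mem_sdiff.mp ht).2
              have : ¬ ℓ t ≤ b t := fun h => this (Finset.mem_filter.mpr ⟨Finset.mem_univ _, h⟩)
              omega
            have hsplit : ∑ t ∈ univ \ T, b t + ∑ t ∈ T, b t = ∑ t, b t :=
              Finset.sum_sdiff (Finset.subset_univ T)
            have hsplitℓ : ∑ t ∈ univ \ T, ℓ t + ∑ t ∈ T, ℓ t = ∑ t, ℓ t :=
              Finset.sum_sdiff (Finset.subset_univ T)
            have hcardTc : (univ \ T).card = d - m := by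
              rw [Finset.card_sdiff_of_subset (Finset.subset_univ T)]
              simp [hmdef]
            have hTcsum : ∑ t ∈ univ \ T, (b t + 1) = ∑ t ∈ univ \ T, b t + (d - m) := by
              rw [Finset.sum_add_distrib, Finset.sum_const, hcardTc, smul_eq_mul, mul_one]
            set S0 : ℕ := ∑ t, b t with hS0def
            have hkey : S0 + (d - m) ≤ n := by
              have h1 : S0 + (d - m) ≤ ∑ t, ℓ t := by omega
              omega
            set a : ℕ := n - S0 with hadef
            have ha : d - m ≤ a := by omega
            have haS : S0 + a = n := by omega
            -- cardinality of each fiber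
            have hcard : ∀ q, q < d →
                ((A q).filter (fun ℓ' => ρ ℓ' = b)).card = (a + (m-1) - q).choose (m-1) := by
              intro q hq
              by_cases hqa : q ≤ a
              · have hbij : ((A q).filter (fun ℓ' => ρ ℓ' = b)).card
                    = (T.piAntidiag (a - q)).card := by
                  refine Finset.card_bij' (fun ℓ' _ => fun t => ℓ' t - b t)
                    (fun ν _ => fun t => ν t + b t) ?_ ?_ ?_ ?_
                  · intro ℓ' hl'
                    obtain ⟨hble, hoff, hbT⟩ := hfiber_min q ℓ' hl'
                    obtain ⟨hpi, hsum, -⟩ := Finset.mem_filter.mp (Finset.mem_filter.mp hl').1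
                    rw [Finset.mem_piAntidiag]
                    refine ⟨?_, ?_⟩
                    · show ∑ t ∈ T, (ℓ' t - b t) = a - q
                      have huniv : ∑ t ∈ T, (ℓ' t - b t) = ∑ t, (ℓ' t - b t) := by
                        refine Finset.sum_subset (Finset.subset_univ T) fun t _ ht => ?_
                        rw [hoff t ht]
                        omega
                      have hz : ((∑ t, (ℓ' t - b t) : ℕ) : ℤ) = (a : ℤ) - q := by
                        rw [Nat.cast_sum]
                        rw [Finset.sum_congr rfl fun t _ => Nat.cast_sub (hble t)]
                        rw [Finset.sum_sub_distrib, hsum]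
                        have : ∑ t, ((b t : ℤ)) = (S0 : ℤ) := by
                          rw [hS0def]; push_cast; ring
                        rw [this]
                        omega
                      omega
                    · intro t hne
                      by_contra hc
                      exact hne (show ℓ' t - b t = 0 by rw [hoff t hc, Nat.sub_self])
                  · intro ν hν
                    rw [Finset.mem_piAntidiag] at hν
                    obtain ⟨hνsum, hνsupp⟩ := hν
                    have hν0 : ∀ t ∉ T, ν t = 0 := by
                      intro t ht
                      by_contra hc
                      exact ht (hνsupp t hc)
                    have hνle : ∀ t, ν t ≤ a - q := by
                      intro t
                      by_cases ht : t ∈ T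
                      · have h := Finset.single_le_sum (f := ν) (fun _ _ => Nat.zero_le _) ht
                        exact le_trans h (le_of_eq hνsum)
                      · rw [hν0 t ht]; omega
                    have hble : ∀ t, b t ≤ S0 := by
                      intro t
                      exact Finset.single_le_sum (fun _ _ => Nat.zero_le _) (Finset.mem_univ t)
                    rw [Finset.mem_filter]
                    have hνuniv : ∑ t, ν t = a - q := by
                      rw [← hνsum]
                      exact (Finset.sum_subset (Finset.subset_univ T) fun t _ ht =>
                        hν0 t ht).symm
                    refine ⟨Finset.mem_filter.mpr ⟨?_, ?_, ⟨t0, ?_⟩⟩, ?_⟩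
                    · rw [Fintype.mem_piFinset]
                      intro t
                      rw [Finset.mem_range]
                      show ν t + b t < n + 1
                      have := hνle t
                      have := hble t
                      omega
                    · push_cast
                      rw [Finset.sum_add_distrib]
                      have h1 : ∑ t, ((ν t : ℤ)) = ((a - q : ℕ) : ℤ) := by
                        rw [← hνuniv]; push_cast; ring
                      have h2 : ∑ t, ((b t : ℤ)) = (S0 : ℤ) := by
                        rw [hS0def]; push_cast; ring
                      rw [h1, h2]
                      omega
                    · show ν t0 + b t0 < ℓ t0
                      rw [hν0 t0 ht0]
                      omega
                    · funext t
                      by_cases ht : t ∈ T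
                      · have hbt : b t = ℓ t :=
                          le_antisymm (hbl t) ((Finset.mem_filter.mp ht).2)
                        show min (ν t + b t) (ℓ t) = b t
                        rw [hbt]
                        exact min_eq_right (Nat.le_add_left _ _)
                      · show min (ν t + b t) (ℓ t) = b t
                        rw [hν0 t ht, Nat.zero_add]
                        have : ¬ ℓ t ≤ b t := fun h => ht (Finset.mem_filter.mpr
                          ⟨Finset.mem_univ _, h⟩)
                        exact min_eq_left (by omega)
                  · intro ℓ' hl'
                    obtain ⟨hble, -, -⟩ := hfiber_min q ℓ' hl'
                    funext t
                    exact Nat.sub_add_cancel (hble t)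
                  · intro ν hν
                    funext t
                    show ν t + b t - b t = ν t
                    omega
                rw [hbij, sb_card T hT (a - q)]
                rw [show a - q + T.card - 1 = (a - q) + (m - 1) by omega]
                rw [← Nat.choose_symm (Nat.le_add_right (a-q) (m-1)), Nat.add_sub_cancel_left]
                congr 1
                omega
              · -- q > a : fiber is empty and the binomial coefficient vanishes
                have hempty : (A q).filter (fun ℓ' => ρ ℓ' = b) = ∅ := by
                  rw [Finset.filter_eq_empty_iff]
                  intro ℓ' hA hρb
                  have hfm := hfiber_min q ℓ' (Finset.mem_filter.mpr ⟨hA, hρb⟩)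
                  obtain ⟨hble, -, -⟩ := hfm
                  obtain ⟨-, hsum, -⟩ := Finset.mem_filter.mp hA
                  have h1 : (S0 : ℤ) ≤ ∑ t, ((ℓ' t : ℤ)) := by
                    have : ∑ t, ((b t : ℤ)) = (S0 : ℤ) := by
                      rw [hS0def]; push_cast; ring
                    rw [← this]
                    exact Finset.sum_le_sum fun t _ => by exact_mod_cast hble t
                  rw [hsum] at h1
                  omega
                rw [hempty]
                rw [Nat.choose_eq_zero_of_lt (by omega)]
                simp
            -- conclude with the alternating binomial identity
            have hz := altsum_choose (m-1) (d-1) (a + (m-1)) (by omega) (by omega)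
            have hd1 : d = (d-1) + 1 := by omega
            rw [Finset.sum_congr rfl (fun q hq => by
              rw [hcard q (Finset.mem_range.mp hq)])]
            rw [hd1]
            exact_mod_cast hz
          · -- T empty : all fibers empty
            rw [Finset.not_nonempty_iff_eq_empty] at hT
            have hblt : ∀ t, b t < ℓ t := by
              intro t
              have : t ∉ T := hT ▸ Finset.notMem_empty t
              have : ¬ ℓ t ≤ b t := fun h => this (Finset.mem_filter.mpr
                ⟨Finset.mem_univ _, h⟩)
              omega
            have hempty : ∀ q, q < d → (A q).filter (fun ℓ' => ρ ℓ' = b) = ∅ := by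
              intro q hq
              rw [Finset.filter_eq_empty_iff]
              intro ℓ' hA hρb
              obtain ⟨hble, hoff, -⟩ := hfiber_min q ℓ' (Finset.mem_filter.mpr ⟨hA, hρb⟩)
              have hall : ∀ t, ℓ' t = b t := by
                intro t
                refine hoff t fun ht => ?_
                exact absurd ((Finset.mem_filter.mp ht).2) (by have := hblt t; omega)
              obtain ⟨-, hsum, -⟩ := Finset.mem_filter.mp hA
              have h1 : ∑ t, ((ℓ' t : ℤ)) = ∑ t, ((b t : ℤ)) := by
                exact Finset.sum_congr rfl fun t _ => by rw [hall t]
              have h2 : ∑ t, ((b t : ℤ)) + d ≤ ∑ t, ((ℓ t : ℤ)) := by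
                have h : ∑ t, ((b t : ℤ) + 1) ≤ ∑ t, ((ℓ t : ℤ)) := by
                  refine Finset.sum_le_sum fun t _ => ?_
                  have := hblt t
                  omega
                rw [Finset.sum_add_distrib] at h
                simpa using h
              have h3 : ∑ t, ((ℓ t : ℤ)) ≤ n := by
                have : ((∑ t, ℓ t : ℕ) : ℤ) ≤ (n : ℤ) := by exact_mod_cast hℓ
                push_cast at this
                exact this
              omega
            rw [Finset.sum_congr rfl (fun q hq => by
              rw [hempty q (Finset.mem_range.mp hq)])]
            simp
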